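/- Fix e > 0 (the elementary charge), T > 0, μ ∈ ℝ, and for b > 0 let e_{n,b} = b(n + 1/2), n(b,T,μ) = (b/(2π)) Σ_{n=0}^{∞} (e^{(e_{n,b} − μ)/T} + 1)^{−1}, and m_circ(b,T,μ) = e (b/(2π)) Σ_{n=0}^{∞} (n + 1/2) (e^{(e_{n,b} − μ)/T} + 1)^{−1}. Then all three series converge, b ↦ n(b,T,μ) and μ ↦ m_circ(b,T,μ) are differentiable, and e² ∂_b n(b,T,μ) + e ∂_μ m_circ(b,T,μ) = e² n(b,T,μ)/b. -/

import Mathlib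

/-!
Every term depends on `b` and `μ` only through `(μ - b (n + 1/2)) / T`, so
`∂_b f_n = -(n + 1/2) ∂_μ f_n` for the occupations `f_n`. Hence in
`∂_b n = n / b + (b / 2π) ∂_b ∑ f_n` the second term is exactly cancelled by
`∂_μ m_circ / e = (b / 2π) ∂_μ ∑ (n + 1/2) f_n`. Termwise differentiation is justified because
the occupations decay geometrically in `n`, the derivative of the sigmoid is bounded by the sigmoid
itself, and the occupations are monotone in `b` and `μ`.
-/

open Real

noncomputable section

/-- The Landau particle density `n(b,T,μ) = (b/(2π)) Σ_n (e^{(e_{n,b}−μ)/T} + 1)^{−1}`. -/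
def landauDensity (b T μ : ℝ) : ℝ :=
  b / (2 * Real.pi) * ∑' n : ℕ, (Real.exp ((b * (n + 1 / 2) - μ) / T) + 1)⁻¹

/-- The circulating magnetization
`m_circ(b,T,μ) = e (b/(2π)) Σ_n (n + 1/2)(e^{(e_{n,b}−μ)/T} + 1)^{−1}`. -/
def landauMcirc (e b T μ : ℝ) : ℝ :=
  e * (b / (2 * Real.pi)) * ∑' n : ℕ, ((n : ℝ) + 1 / 2) * (Real.exp ((b * (n + 1 / 2) - μ) / T) + 1)⁻¹

namespace Landau

lemma inv_exp_div_add_one (ε μ T : ℝ) :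
    (exp ((ε - μ) / T) + 1)⁻¹ = sigmoid ((μ - ε) / T) := by
  rw [sigmoid_def, add_comm, ← neg_div, neg_sub]

lemma sigmoid_le_exp (x : ℝ) : sigmoid x ≤ exp x := by
  rw [sigmoid_def, ← inv_inv (exp x), ← exp_neg]
  exact inv_anti₀ (exp_pos _) (le_add_of_nonneg_left zero_le_one)

lemma sigmoid_mul_one_sub_le (x : ℝ) : sigmoid x * (1 - sigmoid x) ≤ sigmoid x :=
  mul_le_of_le_one_right (sigmoid_nonneg x) (by linarith [sigmoid_pos x])

/-- The Fermi–Dirac occupation `(e^{(e_{n,b} - μ)/T} + 1)⁻¹`, written as `σ((μ - e_{n,b})/T)`. -/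
def occupation (b T μ : ℝ) (n : ℕ) : ℝ := sigmoid ((μ - b * (n + 1 / 2)) / T)

/-- `∂_μ` of `∑ (n + 1/2) f_n` and `-∂_b` of `∑ f_n`, where `f_n` is the occupation. -/
def fermiSurfaceSum (b T μ : ℝ) : ℝ :=
  ∑' n : ℕ, ((n : ℝ) + 1 / 2) / T * (occupation b T μ n * (1 - occupation b T μ n))

lemma occupation_nonneg (b T μ : ℝ) (n : ℕ) : 0 ≤ occupation b T μ n := sigmoid_nonneg _

lemma hasDerivAt_occupation_field (T μ : ℝ) (n : ℕ) (b : ℝ) :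
    HasDerivAt (fun b' => occupation b' T μ n)
      (-(((n : ℝ) + 1 / 2) / T * (occupation b T μ n * (1 - occupation b T μ n)))) b := by
  have hinner : HasDerivAt (fun b' => (μ - b' * (n + 1 / 2)) / T) (-(((n : ℝ) + 1 / 2) / T)) b :=
    ((((hasDerivAt_id' b).mul_const _).const_sub μ).div_const T).congr_deriv (by ring)
  exact ((hasDerivAt_sigmoid _).comp b hinner).congr_deriv (by unfold occupation; ring)

lemma hasDerivAt_level_mul_occupation_chemPot (b T : ℝ) (n : ℕ) (μ : ℝ) :
    HasDerivAt (fun μ' => ((n : ℝ) + 1 / 2) * occupation b T μ' n)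
      (((n : ℝ) + 1 / 2) / T * (occupation b T μ n * (1 - occupation b T μ n))) μ := by
  have hinner : HasDerivAt (fun μ' => (μ' - b * (n + 1 / 2)) / T) (1 / T) μ :=
    (((hasDerivAt_id' μ).sub_const _).div_const T).congr_deriv (by ring)
  exact (((hasDerivAt_sigmoid _).comp μ hinner).const_mul _).congr_deriv
    (by unfold occupation; ring)

section

variable {b T : ℝ}

lemma occupation_antitone_field (hT : 0 < T) (μ : ℝ) (n : ℕ) :
    Antitone fun b => occupation b T μ n := fun b₁ b₂ h =>
  sigmoid_le <| div_le_div_of_nonneg_right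
    (sub_le_sub_left (mul_le_mul_of_nonneg_right h (by positivity)) μ) hT.le

lemma occupation_monotone_chemPot (hT : 0 < T) (b : ℝ) (n : ℕ) :
    Monotone fun μ => occupation b T μ n := fun _ _ h =>
  sigmoid_le <| div_le_div_of_nonneg_right (sub_le_sub_right h _) hT.le

lemma summable_level_mul_exp (hb : 0 < b) (hT : 0 < T) (μ : ℝ) :
    Summable fun n : ℕ => ((n : ℝ) + 1 / 2) * exp ((μ - b * (n + 1 / 2)) / T) := by
  have hr : ‖exp (-(b / T))‖ < 1 := by
    rw [norm_of_nonneg (exp_pos _).le, exp_lt_one_iff]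
    exact neg_neg_of_pos (div_pos hb hT)
  have hgeom := (summable_pow_mul_geometric_of_norm_lt_one 1 hr).add
    ((summable_geometric_of_norm_lt_one hr).mul_left (1 / 2))
  refine (hgeom.mul_left (exp ((μ - b / 2) / T))).congr fun n => ?_
  have hsplit : exp ((μ - b * (n + 1 / 2)) / T) = exp ((μ - b / 2) / T) * exp (-(b / T)) ^ n := by
    rw [← exp_nat_mul, ← exp_add]
    ring_nf
  rw [hsplit]
  ring

lemma summable_level_mul_occupation (hb : 0 < b) (hT : 0 < T) (μ : ℝ) :
    Summable fun n : ℕ => ((n : ℝ) + 1 / 2) * occupation b T μ n :=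
  (summable_level_mul_exp hb hT μ).of_nonneg_of_le
    (fun n => mul_nonneg (by positivity) (occupation_nonneg b T μ n))
    (fun n => mul_le_mul_of_nonneg_left (sigmoid_le_exp _) (by positivity))

lemma summable_occupation (hb : 0 < b) (hT : 0 < T) (μ : ℝ) :
    Summable (occupation b T μ) :=
  ((summable_level_mul_occupation hb hT μ).mul_left 2).of_nonneg_of_le
    (occupation_nonneg b T μ) fun n => by
      rw [← mul_assoc]
      exact le_mul_of_one_le_left (occupation_nonneg b T μ n)
        (by linarith [n.cast_nonneg (α := ℝ)])

lemma norm_level_div_mul_sigmoid_deriv_le (hT : 0 < T) (n : ℕ) (x : ℝ) :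
    ‖((n : ℝ) + 1 / 2) / T * (sigmoid x * (1 - sigmoid x))‖ ≤
      ((n : ℝ) + 1 / 2) / T * sigmoid x := by
  have hw : 0 ≤ sigmoid x * (1 - sigmoid x) :=
    mul_nonneg (sigmoid_nonneg x) (by linarith [sigmoid_le_one x])
  rw [norm_of_nonneg (by positivity)]
  exact mul_le_mul_of_nonneg_left (sigmoid_mul_one_sub_le x) (by positivity)

lemma hasDerivAt_tsum_occupation_field (hb : 0 < b) (hT : 0 < T) (μ : ℝ) :
    HasDerivAt (fun b' => ∑' n, occupation b' T μ n) (-fermiSurfaceSum b T μ) b := by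
  have hbound : Summable fun n : ℕ => ((n : ℝ) + 1 / 2) / T * occupation (b / 2) T μ n :=
    ((summable_level_mul_occupation (half_pos hb) hT μ).div_const T).congr fun n => by ring
  rw [fermiSurfaceSum, ← tsum_neg]
  refine hasDerivAt_tsum_of_isPreconnected hbound isOpen_Ioi isPreconnected_Ioi
    (fun n b' _ => hasDerivAt_occupation_field T μ n b') (fun n b' hb' => ?_)
    (half_lt_self hb) (summable_occupation hb hT μ) (half_lt_self hb)
  rw [norm_neg]
  exact (norm_level_div_mul_sigmoid_deriv_le hT n _).trans <|
    mul_le_mul_of_nonneg_left (occupation_antitone_field hT μ n hb'.le) (by positivity)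

lemma hasDerivAt_tsum_level_mul_occupation_chemPot (hb : 0 < b) (hT : 0 < T) (μ : ℝ) :
    HasDerivAt (fun μ' => ∑' n : ℕ, ((n : ℝ) + 1 / 2) * occupation b T μ' n)
      (fermiSurfaceSum b T μ) μ := by
  have hbound : Summable fun n : ℕ => ((n : ℝ) + 1 / 2) / T * occupation b T (μ + 1) n :=
    ((summable_level_mul_occupation hb hT (μ + 1)).div_const T).congr fun n => by ring
  refine hasDerivAt_tsum_of_isPreconnected hbound isOpen_Iio isPreconnected_Iio
    (fun n μ' _ => hasDerivAt_level_mul_occupation_chemPot b T n μ') (fun n μ' hμ' => ?_)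
    (lt_add_one μ) (summable_level_mul_occupation hb hT μ) (lt_add_one μ)
  exact (norm_level_div_mul_sigmoid_deriv_le hT n _).trans <|
    mul_le_mul_of_nonneg_left (occupation_monotone_chemPot hT b n hμ'.le) (by positivity)

end

lemma landauDensity_eq (b T μ : ℝ) :
    landauDensity b T μ = b / (2 * π) * ∑' n, occupation b T μ n := by
  simp only [landauDensity, occupation, inv_exp_div_add_one]

lemma landauMcirc_eq (e b T μ : ℝ) :
    landauMcirc e b T μ =
      e * (b / (2 * π)) * ∑' n : ℕ, ((n : ℝ) + 1 / 2) * occupation b T μ n := by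
  simp only [landauMcirc, occupation, inv_exp_div_add_one]

end Landau

open Landau in
theorem landau_streda_decomposition_general (e b T μ : ℝ) (hb : 0 < b) (hT : 0 < T) :
    Summable (fun n : ℕ => (Real.exp ((b * (n + 1 / 2) - μ) / T) + 1)⁻¹) ∧
    Summable (fun n : ℕ =>
      ((n : ℝ) + 1 / 2) * (Real.exp ((b * (n + 1 / 2) - μ) / T) + 1)⁻¹) ∧
    ∃ dn dm : ℝ,
      HasDerivAt (fun b' : ℝ => landauDensity b' T μ) dn b ∧
      HasDerivAt (fun μ' : ℝ => landauMcirc e b T μ') dm μ ∧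
      e ^ 2 * dn + e * dm = e ^ 2 * landauDensity b T μ / b := by
  simp only [inv_exp_div_add_one, landauDensity_eq, landauMcirc_eq]
  have hn := ((hasDerivAt_id' b).div_const (2 * π)).mul (hasDerivAt_tsum_occupation_field hb hT μ)
  have hm := (hasDerivAt_tsum_level_mul_occupation_chemPot hb hT μ).const_mul (e * (b / (2 * π)))
  refine ⟨summable_occupation hb hT μ, summable_level_mul_occupation hb hT μ,
    _, _, hn, hm, ?_⟩
  field_simp
  ring

/-- **St'reda-type decomposition of the Landau Hall conductivity.**
For `e, b, T > 0` and `μ ∈ ℝ`: the series defining `n(b,T,μ)` and `m_circ(b,T,μ)` converge,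
the functions `b ↦ n(b,T,μ)` and `μ ↦ m_circ(b,T,μ)` are differentiable, and
`e² ∂_b n(b,T,μ) + e ∂_μ m_circ(b,T,μ) = e² n(b,T,μ)/b`. -/
theorem landau_streda_decomposition (e b T μ : ℝ) (he : 0 < e) (hb : 0 < b) (hT : 0 < T) :
    Summable (fun n : ℕ => (Real.exp ((b * (n + 1 / 2) - μ) / T) + 1)⁻¹) ∧
    Summable (fun n : ℕ =>
      ((n : ℝ) + 1 / 2) * (Real.exp ((b * (n + 1 / 2) - μ) / T) + 1)⁻¹) ∧
    ∃ dn dm : ℝ,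
      HasDerivAt (fun b' : ℝ => landauDensity b' T μ) dn b ∧
      HasDerivAt (fun μ' : ℝ => landauMcirc e b T μ') dm μ ∧
      e ^ 2 * dn + e * dm = e ^ 2 * landauDensity b T μ / b :=
  landau_streda_decomposition_general e b T μ hb hT

end
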